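/- With F(β, λ) = -(β⟨P_c, λ⟩ + (1-β)W(λ))·Vol(Δ) as above: (i) if β < R then F(β,λ) < 0 for all λ ≠ 0; (ii) if β = R then F(β,λ) ≤ 0 for all λ, with equality iff the supporting hyperplane H_λ of Δ contains Q; (iii) if β > R then there exists λ with F(β,λ) > 0. -/

import Mathlib

open scoped RealInnerProductSpace
open Filter Topology

/-!
Write `G(β, λ) = β⟪P_c, λ⟫ + (1 - β) W(λ)`, so that `F = -G · Vol(Δ)`. Since `Q ∈ Δ`, the choice
of `Q` makes `G(R, λ) = (1 - R)(W(λ) - ⟪Q, λ⟫) ≥ 0`, vanishing exactly when `H_λ` passes through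
`Q`. As `G` is affine in `β` with `G(0, λ) = W(λ)`, which is positive for `λ ≠ 0` because `0` is
interior, `G(β, λ) = (β / R) G(R, λ) + (1 - β / R) W(λ)`. This is positive for `0 ≤ β < R`, and
for `β > R` it is negative at any `λ` supporting `Δ` at the boundary point `Q`.
-/

section InnerProductSpace

variable {E : Type*} [NormedAddCommGroup E] [InnerProductSpace ℝ E]

theorem exists_mem_inner_pos_of_zero_mem_interior {s : Set E} (h0 : (0 : E) ∈ interior s)
    {v : E} (hv : v ≠ 0) : ∃ p ∈ s, 0 < ⟪p, v⟫ := by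
  have hlim : Tendsto (fun t : ℝ => t • v) (𝓝[>] 0) (𝓝 0) :=
    tendsto_nhdsWithin_of_tendsto_nhds
      ((continuous_id.smul continuous_const).tendsto' 0 0 (zero_smul ℝ v))
  obtain ⟨t, hts, ht⟩ :=
    ((hlim.eventually_mem (mem_interior_iff_mem_nhds.1 h0)).and self_mem_nhdsWithin).exists
  refine ⟨t • v, hts, ?_⟩
  rw [real_inner_smul_left, real_inner_self_eq_norm_sq]
  have : (0 : ℝ) < t := ht
  positivity

theorem Convex.exists_inner_le_of_notMem_interior [CompleteSpace E] {s : Set E}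
    (hs : Convex ℝ s) (hs' : (interior s).Nonempty) {x : E} (hx : x ∉ interior s) :
    ∃ v : E, (∀ y ∈ s, ⟪y, v⟫ ≤ ⟪x, v⟫) ∧ ∀ y ∈ interior s, ⟪y, v⟫ < ⟪x, v⟫ := by
  obtain ⟨f, hf⟩ := geometric_hahn_banach_open_point hs.interior isOpen_interior hx
  have hinner : ∀ y, ⟪y, (InnerProductSpace.toDual ℝ E).symm f⟫ = f y := fun y => by
    rw [real_inner_comm, InnerProductSpace.toDual_symm_apply]
  refine ⟨(InnerProductSpace.toDual ℝ E).symm f, fun y hy => ?_, fun y hy => ?_⟩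
  · have hcl : closure (interior s) ⊆ {z | f z ≤ f x} :=
      closure_minimal (fun z hz => (hf z hz).le) (isClosed_le f.continuous continuous_const)
    rw [hinner, hinner]
    exact hcl (hs.closure_interior_eq_closure_of_nonempty_interior hs' ▸ subset_closure hy)
  · rw [hinner, hinner]
    exact hf y hy

theorem inner_add_eq_mul_sub_inner_neg_smul (P v : E) (w : ℝ) {R : ℝ} (hR : R ≠ 1) :
    R * ⟪P, v⟫ + (1 - R) * w = (1 - R) * (w - ⟪(-(R / (1 - R))) • P, v⟫) := by
  have : 1 - R ≠ 0 := sub_ne_zero.2 hR.symm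
  rw [real_inner_smul_left]
  field_simp
  ring

end InnerProductSpace

theorem stmt9_general {n : ℕ} (Δ : Set (EuclideanSpace ℝ (Fin n)))
    (hcomp : IsCompact Δ) (hconv : Convex ℝ Δ)
    (h0 : (0 : EuclideanSpace ℝ (Fin n)) ∈ interior Δ)
    (vol : ℝ) (hvol : 0 < vol)
    (Pc : EuclideanSpace ℝ (Fin n))
    (R : ℝ) (hR : R ∈ Set.Ioo (0:ℝ) 1)
    (hQ : (-(R / (1 - R))) • Pc ∈ frontier Δ)
    (W : EuclideanSpace ℝ (Fin n) → ℝ)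
    (hW : ∀ lam, IsGreatest ((fun p => ⟪p, lam⟫) '' Δ) (W lam))
    (F : ℝ → EuclideanSpace ℝ (Fin n) → ℝ)
    (hF : ∀ β lam, F β lam = -(β * ⟪Pc, lam⟫ + (1 - β) * W lam) * vol)
    (β : ℝ) (hβ : β ∈ Set.Ioo (0:ℝ) 1) :
    (β < R → ∀ lam : EuclideanSpace ℝ (Fin n), lam ≠ 0 → F β lam < 0) ∧
    (β = R → ∀ lam : EuclideanSpace ℝ (Fin n),
      F β lam ≤ 0 ∧ (F β lam = 0 ↔ ⟪(-(R / (1 - R))) • Pc, lam⟫ = W lam)) ∧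
    (R < β → ∃ lam : EuclideanSpace ℝ (Fin n), 0 < F β lam) := by
  obtain ⟨hR0, hR1⟩ := hR
  set Q := (-(R / (1 - R))) • Pc
  have hQΔ : Q ∈ Δ := hcomp.isClosed.frontier_subset hQ
  have hFR : ∀ lam, F R lam = -((1 - R) * (W lam - ⟪Q, lam⟫)) * vol := fun lam => by
    rw [hF, inner_add_eq_mul_sub_inner_neg_smul Pc lam (W lam) hR1.ne]
  have hFR_nonpos : ∀ lam, F R lam ≤ 0 := fun lam => by
    have hWQ : ⟪Q, lam⟫ ≤ W lam := (hW lam).2 ⟨Q, hQΔ, rfl⟩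
    rw [hFR, neg_mul]
    exact neg_nonpos.2 (by have := sub_nonneg.2 hWQ; positivity)
  have hFβ : ∀ lam, F β lam = β / R * F R lam - (1 - β / R) * W lam * vol := fun lam => by
    simp only [hF]
    field_simp
    ring
  refine ⟨fun hβR lam hlam => ?_, fun hβR lam => ?_, fun hRβ => ?_⟩
  · obtain ⟨p, hpΔ, hp⟩ := exists_mem_inner_pos_of_zero_mem_interior h0 hlam
    have hW0 : 0 < W lam := hp.trans_le ((hW lam).2 ⟨p, hpΔ, rfl⟩)
    have hcoef : 0 < 1 - β / R := sub_pos.2 ((div_lt_one hR0).2 hβR)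
    have := mul_nonpos_of_nonneg_of_nonpos (div_nonneg hβ.1.le hR0.le) (hFR_nonpos lam)
    rw [hFβ]
    linarith [mul_pos (mul_pos hcoef hW0) hvol]
  · subst hβR
    refine ⟨hFR_nonpos lam, ?_⟩
    rw [hFR, eq_comm (a := ⟪Q, lam⟫)]
    simp [hvol.ne', (sub_pos.2 hR1).ne', sub_eq_zero]
  · obtain ⟨lam, hsupp, hlt⟩ := hconv.exists_inner_le_of_notMem_interior ⟨0, h0⟩ hQ.2
    have hQpos : 0 < ⟪Q, lam⟫ := by simpa using hlt 0 h0
    have hWQ : W lam = ⟪Q, lam⟫ :=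
      (hW lam).unique ⟨⟨Q, hQΔ, rfl⟩, by rintro _ ⟨p, hp, rfl⟩; exact hsupp p hp⟩
    have hcoef : 0 < β / R - 1 := sub_pos.2 ((one_lt_div hR0).2 hRβ)
    refine ⟨lam, ?_⟩
    rw [hFβ, hFR, hWQ, sub_self]
    linarith [mul_pos (mul_pos hcoef hQpos) hvol]

/-- Main theorem in combinatorial form. With
`F(β,λ) = -(β⟨P_c,λ⟩ + (1-β)W(λ))·Vol(Δ)`:
(i) if `β < R` then `F(β,λ) < 0` for all `λ ≠ 0`;
(ii) if `β = R` then `F(β,λ) ≤ 0` for all `λ`, with equality iff the supporting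
hyperplane `H_λ` contains `Q`;
(iii) if `β > R` then there exists `λ` with `F(β,λ) > 0`. -/
theorem stmt9 {n : ℕ} (Δ : Set (EuclideanSpace ℝ (Fin n)))
    (hcomp : IsCompact Δ) (hconv : Convex ℝ Δ)
    (h0 : (0 : EuclideanSpace ℝ (Fin n)) ∈ interior Δ)
    (vol : ℝ) (hvol : 0 < vol)
    (Pc : EuclideanSpace ℝ (Fin n)) (hPc : Pc ∈ Δ) (hPc0 : Pc ≠ 0)
    (R : ℝ) (hR : R ∈ Set.Ioo (0:ℝ) 1)
    (hQ : (-(R / (1 - R))) • Pc ∈ frontier Δ)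
    (W : EuclideanSpace ℝ (Fin n) → ℝ)
    (hW : ∀ lam, IsGreatest ((fun p => ⟪p, lam⟫) '' Δ) (W lam))
    (F : ℝ → EuclideanSpace ℝ (Fin n) → ℝ)
    (hF : ∀ β lam, F β lam = -(β * ⟪Pc, lam⟫ + (1 - β) * W lam) * vol)
    (β : ℝ) (hβ : β ∈ Set.Ioo (0:ℝ) 1) :
    (β < R → ∀ lam : EuclideanSpace ℝ (Fin n), lam ≠ 0 → F β lam < 0) ∧
    (β = R → ∀ lam : EuclideanSpace ℝ (Fin n),
      F β lam ≤ 0 ∧ (F β lam = 0 ↔ ⟪(-(R / (1 - R))) • Pc, lam⟫ = W lam)) ∧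
    (R < β → ∃ lam : EuclideanSpace ℝ (Fin n), 0 < F β lam) :=
  stmt9_general Δ hcomp hconv h0 vol hvol Pc R hR hQ W hW F hF β hβ
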